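/- arXiv:2502.05278 — 7 statements merged into one kernel-verified Lean document; each statement's English description precedes it below -/
import Mathlib

section
/- Let K be a field, f_1,...,f_s, g ∈ K[x_1,...,x_n], and t a new variable. Then g lies in the ideal generated by f_1,...,f_s in K[x_1,...,x_n] if and only if t·g lies in the subalgebra of K[t,x_1,...,x_n] generated by t·f_1,...,t·f_s, x_1,...,x_n. -/
open MvPolynomial

private lemma coeff_mul_one' {R : Type*} [CommRing R] (p q : Polynomial R) :
    (p*q).coeff 1 = p.coeff 0 * q.coeff 1 + p.coeff 1 * q.coeff 0 := by
  rw [Polynomial.coeff_mul]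
  simp [Finset.Nat.antidiagonal_succ, Finset.sum_insert, Prod.map]

/-- Ideal membership of `g` in `⟨f₁,…,f_s⟩ ⊆ K[x₁,…,xₙ]` is equivalent to subalgebra
membership of `t·g` in `K[t·f₁,…,t·f_s, x₁,…,xₙ] ⊆ K[t,x₁,…,xₙ]`, where `t = X none`. -/
theorem stmt0 {K : Type*} [Field K] {n s : ℕ}
    (f : Fin s → MvPolynomial (Fin n) K) (g : MvPolynomial (Fin n) K) :
    g ∈ Ideal.span (Set.range f) ↔
      X none * rename (some : Fin n → Option (Fin n)) g ∈
        Algebra.adjoin K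
          ((Set.range fun i => X none * rename (some : Fin n → Option (Fin n)) (f i)) ∪
            Set.range fun j : Fin n => (X (some j) : MvPolynomial (Option (Fin n)) K)) := by
  set A := Algebra.adjoin K
      ((Set.range fun i => X none * rename (some : Fin n → Option (Fin n)) (f i)) ∪
        Set.range fun j : Fin n => (X (some j) : MvPolynomial (Option (Fin n)) K)) with hA
  have hrn : ∀ a : MvPolynomial (Fin n) K, rename (some : Fin n → Option (Fin n)) a ∈ A := by
    intro a
    have h1 : rename (some : Fin n → Option (Fin n)) a ∈
        Algebra.adjoin K (Set.range fun j : Fin n =>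
          (X (some j) : MvPolynomial (Option (Fin n)) K)) := by
      have : (Set.range fun j : Fin n => (X (some j) : MvPolynomial (Option (Fin n)) K))
          = Set.range (X ∘ (some : Fin n → Option (Fin n))) := rfl
      rw [this, Algebra.adjoin_range_eq_range_aeval]
      exact ⟨a, by rw [rename_eq_aeval]; rfl⟩
    exact Algebra.adjoin_mono Set.subset_union_right h1
  constructor
  · intro hg
    refine Submodule.span_induction ?_ ?_ ?_ ?_ hg
    · intro x hx
      obtain ⟨i, rfl⟩ := hx
      exact Algebra.subset_adjoin (Set.mem_union_left _ ⟨i, rfl⟩)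
    · rw [map_zero, mul_zero]; exact zero_mem A
    · intro x y _ _ hx hy
      rw [map_add, mul_add]
      exact add_mem hx hy
    · intro a x _ hx
      have : X none * rename (some : Fin n → Option (Fin n)) (a • x)
          = rename (some : Fin n → Option (Fin n)) a *
            (X none * rename (some : Fin n → Option (Fin n)) x) := by
        rw [smul_eq_mul, map_mul]; ring
      rw [this]
      exact mul_mem (hrn a) hx
  · intro hg
    set ψ : MvPolynomial (Option (Fin n)) K →ₐ[K] Polynomial (MvPolynomial (Fin n) K) :=
      MvPolynomial.aeval (fun o =>
        o.elim Polynomial.X (fun j => Polynomial.C (MvPolynomial.X j))) with hψ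
    have hψr : ∀ h : MvPolynomial (Fin n) K,
        ψ (rename (some : Fin n → Option (Fin n)) h) = Polynomial.C h := by
      intro h
      have : (ψ).comp (MvPolynomial.rename some : _ →ₐ[K] _) = Polynomial.CAlgHom := by
        apply MvPolynomial.algHom_ext
        intro j
        simp [hψ, Polynomial.CAlgHom]
      exact congrFun (congrArg DFunLike.coe this) h
    have key : ∀ p ∈ A, (ψ p).coeff 1 ∈ Ideal.span (Set.range f) := by
      intro p hp
      refine Algebra.adjoin_induction ?_ ?_ ?_ ?_ hp
      · intro x hx
        rcases hx with ⟨i, rfl⟩ | ⟨j, rfl⟩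
        · rw [map_mul, hψr]
          have : ψ (X none) = Polynomial.X := by simp [hψ]
          rw [this]
          rw [Polynomial.coeff_X_mul, Polynomial.coeff_C_zero]
          exact Ideal.subset_span ⟨i, rfl⟩
        · simp [hψ]
      · intro r
        simp [hψ]
      · intro x y _ _ hx hy
        rw [map_add, Polynomial.coeff_add]
        exact add_mem hx hy
      · intro x y _ _ hx hy
        rw [map_mul, coeff_mul_one']
        exact add_mem (Ideal.mul_mem_left _ _ hy) (Ideal.mul_mem_right _ _ hx)
    have := key _ hg
    rwa [map_mul, hψr, show ψ (X none) = Polynomial.X by simp [hψ],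
      Polynomial.coeff_X_mul, Polynomial.coeff_C_zero] at this
end

section
/- Given finite sets S_1,...,S_n ⊆ {1,...,s}, define α_1,...,α_s ∈ {0,1}^n by (α_i)_j = 1 iff i ∈ S_j, and let β = (1,...,1) ∈ ℕ^n. Then there exists a set T ⊆ {1,...,s} with |T ∩ S_j| = 1 for all j if and only if there exist c_1,...,c_s ∈ ℕ with β = Σ_i c_i α_i. -/
/-- The reduction from positive 1-in-3-SAT to monomial subalgebra membership: for finite sets
`S₁,…,Sₙ ⊆ {1,…,s}`, with `(αᵢ)ⱼ = 1` iff `i ∈ Sⱼ` and `β = (1,…,1)`, there is a set `T` with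
`|T ∩ Sⱼ| = 1` for all `j` iff `β = Σᵢ cᵢ αᵢ` for some `c ∈ ℕ^s`. -/
theorem stmt7 {n s : ℕ} (S : Fin n → Finset (Fin s)) :
    (∃ T : Finset (Fin s), ∀ j, (T ∩ S j).card = 1) ↔
      ∃ c : Fin s → ℕ, ∀ j, (∑ i, c i * (if i ∈ S j then 1 else 0)) = 1 := by
  have key : ∀ (c : Fin s → ℕ) (j : Fin n),
      (∑ i, c i * (if i ∈ S j then 1 else 0)) = ∑ i ∈ S j, c i := by
    intro c j
    simp [mul_ite, Finset.sum_ite_mem]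
  constructor
  · rintro ⟨T, hT⟩
    refine ⟨fun i => if i ∈ T then 1 else 0, fun j => ?_⟩
    rw [key]
    rw [Finset.sum_ite_mem]
    simpa [Finset.inter_comm] using hT j
  · rintro ⟨c, hc⟩
    refine ⟨Finset.univ.filter (fun i => c i ≠ 0), fun j => ?_⟩
    have h := hc j
    rw [key] at h
    have h1 : Finset.univ.filter (fun i => c i ≠ 0) ∩ S j
        = (S j).filter (fun i => c i ≠ 0) := by
      ext i; simp [Finset.mem_inter, and_comm]
    rw [h1]
    -- sum over S j = 1, each nonzero term ≥ 1
    have hle : ((S j).filter (fun i => c i ≠ 0)).card ≤ ∑ i ∈ S j, c i := by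
      calc ((S j).filter (fun i => c i ≠ 0)).card
          = ∑ i ∈ (S j).filter (fun i => c i ≠ 0), 1 := by simp
        _ ≤ ∑ i ∈ (S j).filter (fun i => c i ≠ 0), c i := by
            apply Finset.sum_le_sum; intro i hi
            simp only [Finset.mem_filter] at hi
            omega
        _ ≤ ∑ i ∈ S j, c i := Finset.sum_le_sum_of_subset (Finset.filter_subset _ _)
    have hne : ((S j).filter (fun i => c i ≠ 0)).Nonempty := by
      by_contra hemp
      rw [Finset.not_nonempty_iff_eq_empty, Finset.filter_eq_empty_iff] at hemp
      have : ∑ i ∈ S j, c i = 0 := by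
        apply Finset.sum_eq_zero; intro i hi; simpa using hemp hi
      omega
    have := Finset.card_pos.mpr hne
    omega
end

section
/- Let A = K[f_1,...,f_s] ⊆ K[x_1,...,x_n] and fix a monomial order. If g ∈ ⟨f_1,...,f_s⟩ has a representation g = Σ h_i f_i in which the h_i have at most N nonzero terms in total, then t·g has a certificate p ∈ K[u_1,...,u_s,x_1,...,x_n] with t·g = p(t f_1,...,t f_s, x_1,...,x_n) having at most N nonzero terms; conversely any such certificate with M terms yields a representation of g with at most M total terms among the h_i. -/
open MvPolynomial

namespace Stmt10Aux

variable {K : Type*} [Field K] {n s : ℕ}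

lemma exists_single_of_sum_eq_one {a : Fin s →₀ ℕ}
    (h : ∑ i, a i = 1) : ∃ i, a = Finsupp.single i 1 := by
  have h1 : ∃ i, a i ≠ 0 := by
    by_contra hc
    push_neg at hc
    simp [hc] at h
  obtain ⟨i, hi⟩ := h1
  refine ⟨i, ?_⟩
  have hle : a i ≤ 1 := h ▸ Finset.single_le_sum (fun j _ => Nat.zero_le _) (Finset.mem_univ i)
  have hai : a i = 1 := le_antisymm hle (Nat.one_le_iff_ne_zero.mpr hi)
  have hrest : ∀ j, j ≠ i → a j = 0 := by
    intro j hj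
    have h2 : a i + ∑ k ∈ Finset.univ.erase i, a k = 1 := by
      rw [Finset.add_sum_erase Finset.univ a (Finset.mem_univ i)]; exact h
    have hj' : a j ≤ ∑ k ∈ Finset.univ.erase i, a k :=
      Finset.single_le_sum (fun k _ => Nat.zero_le _)
        (Finset.mem_erase.mpr ⟨hj, Finset.mem_univ j⟩)
    omega
  ext j
  rcases eq_or_ne j i with rfl | hj
  · simp [hai]
  · rw [hrest j hj, Finsupp.single_eq_of_ne' (Ne.symm hj)]

lemma optionEquivLeft_rename_some (q : MvPolynomial (Fin n) K) :
    optionEquivLeft K (Fin n) (rename some q) = Polynomial.C q := by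
  induction q using MvPolynomial.induction_on with
  | C a => rw [rename_C, optionEquivLeft_C]
  | add p q hp hq => rw [map_add, map_add, hp, hq, map_add]
  | mul_X p j hp => rw [map_mul, map_mul, rename_X, hp, optionEquivLeft_X_some, ← map_mul]

lemma coeff_one_aux (a : MvPolynomial (Fin n) K) (d : ℕ) :
    (Polynomial.C a * Polynomial.X ^ d).coeff 1 = if d = 1 then a else 0 := by
  rw [Polynomial.coeff_C_mul, Polynomial.coeff_X_pow]
  simp [eq_comm]

lemma aeval_G_monomial (f : Fin s → MvPolynomial (Fin n) K)
    (m : Fin s ⊕ Fin n →₀ ℕ) (c : K) :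
    aeval (Sum.elim (fun i => Polynomial.X * Polynomial.C (f i))
        (fun j => Polynomial.C (X j))) (monomial m c) =
      Polynomial.C (C c * ((∏ i, f i ^ m (Sum.inl i)) *
          monomial (Finsupp.sumFinsuppEquivProdFinsupp m).2 (1:K))) *
        Polynomial.X ^ (∑ i, m (Sum.inl i)) := by
  rw [aeval_monomial, Finsupp.prod_pow, Fintype.prod_sum_type]
  simp only [Sum.elim_inl, Sum.elim_inr]
  have hmon : (∏ j, (X j : MvPolynomial (Fin n) K) ^ m (Sum.inr j)) =
      monomial (Finsupp.sumFinsuppEquivProdFinsupp m).2 1 := by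
    rw [monomial_eq, C_1, one_mul, Finsupp.prod_pow]
    exact Finset.prod_congr rfl fun j _ => by
      rw [Finsupp.snd_sumFinsuppEquivProdFinsupp]
  have h1 : (∏ i, (Polynomial.X * Polynomial.C (f i)) ^ m (Sum.inl i)) =
      Polynomial.X ^ (∑ i, m (Sum.inl i)) * Polynomial.C (∏ i, f i ^ m (Sum.inl i)) := by
    simp_rw [mul_pow, ← Polynomial.C_pow]
    rw [Finset.prod_mul_distrib, Finset.prod_pow_eq_pow_sum, ← map_prod]
  have h2 : (∏ j, (Polynomial.C (X j) : Polynomial (MvPolynomial (Fin n) K)) ^ m (Sum.inr j)) =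
      Polynomial.C (monomial (Finsupp.sumFinsuppEquivProdFinsupp m).2 (1:K)) := by
    simp_rw [← Polynomial.C_pow]
    rw [← map_prod, hmon]
  rw [h1, h2, Polynomial.algebraMap_apply, MvPolynomial.algebraMap_eq, map_mul, map_mul]
  ring

lemma key (f : Fin s → MvPolynomial (Fin n) K) (g : MvPolynomial (Fin n) K)
    (p : MvPolynomial (Fin s ⊕ Fin n) K)
    (hp : aeval (Sum.elim
        (fun i : Fin s => X none * rename (some : Fin n → Option (Fin n)) (f i))
        (fun j : Fin n => (X (some j) : MvPolynomial (Option (Fin n)) K))) p =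
      X none * rename (some : Fin n → Option (Fin n)) g) :
    g = ∑ m ∈ p.support, if (∑ i, m (Sum.inl i)) = 1 then
        C (coeff m p) * ((∏ i, f i ^ m (Sum.inl i)) *
          monomial (Finsupp.sumFinsuppEquivProdFinsupp m).2 (1:K)) else 0 := by
  classical
  have h2 := congrArg (optionEquivLeft K (Fin n)) hp
  rw [map_mul, optionEquivLeft_X_none, optionEquivLeft_rename_some] at h2
  have h3 : optionEquivLeft K (Fin n) (aeval (Sum.elim
        (fun i : Fin s => X none * rename (some : Fin n → Option (Fin n)) (f i))
        (fun j : Fin n => (X (some j) : MvPolynomial (Option (Fin n)) K))) p) =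
      aeval (Sum.elim (fun i => Polynomial.X * Polynomial.C (f i))
        (fun j => Polynomial.C (X j))) p := by
    have hc := comp_aeval_apply (R := K)
      (f := Sum.elim (fun i : Fin s => X none * rename (some : Fin n → Option (Fin n)) (f i))
        (fun j : Fin n => (X (some j) : MvPolynomial (Option (Fin n)) K)))
      (optionEquivLeft K (Fin n)).toAlgHom p
    simp only [AlgEquiv.coe_toAlgHom] at hc
    rw [hc]
    have hfun : (fun v => optionEquivLeft K (Fin n)
          (Sum.elim (fun i : Fin s => X none * rename (some : Fin n → Option (Fin n)) (f i))
            (fun j : Fin n => (X (some j) : MvPolynomial (Option (Fin n)) K)) v)) =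
        Sum.elim (fun i => Polynomial.X * Polynomial.C (f i))
          (fun j => Polynomial.C (X j)) := by
      funext v
      cases v with
      | inl i =>
        rw [Sum.elim_inl, Sum.elim_inl, map_mul, optionEquivLeft_X_none,
          optionEquivLeft_rename_some]
      | inr j => rw [Sum.elim_inr, Sum.elim_inr, optionEquivLeft_X_some]
    rw [hfun]
  rw [h3] at h2
  have h4 : (aeval (Sum.elim (fun i => Polynomial.X * Polynomial.C (f i))
        (fun j => Polynomial.C (X j))) p).coeff 1 = g := by
    rw [h2]
    have : (Polynomial.X : Polynomial (MvPolynomial (Fin n) K)) * Polynomial.C g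
        = Polynomial.C g * Polynomial.X ^ 1 := by ring
    rw [this, coeff_one_aux]
    simp
  rw [← h4]
  conv_lhs => rw [← support_sum_monomial_coeff p]
  rw [map_sum, Polynomial.finset_sum_coeff]
  exact Finset.sum_congr rfl fun m _ => by rw [aeval_G_monomial, coeff_one_aux]

lemma perm (f : Fin s → MvPolynomial (Fin n) K) (m : Fin s ⊕ Fin n →₀ ℕ) (c : K) :
    (if (∑ i, m (Sum.inl i)) = 1 then
        C c * ((∏ i, f i ^ m (Sum.inl i)) *
          monomial (Finsupp.sumFinsuppEquivProdFinsupp m).2 (1:K)) else 0) =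
      ∑ i, if (Finsupp.sumFinsuppEquivProdFinsupp m).1 = Finsupp.single i 1 then
        monomial (Finsupp.sumFinsuppEquivProdFinsupp m).2 c * f i else 0 := by
  classical
  set m₁ := (Finsupp.sumFinsuppEquivProdFinsupp m).1 with hm₁
  set m₂ := (Finsupp.sumFinsuppEquivProdFinsupp m).2 with hm₂
  have hfst : ∀ i, m (Sum.inl i) = m₁ i := fun i =>
    (Finsupp.fst_sumFinsuppEquivProdFinsupp m i).symm
  by_cases hex : ∃ i, m₁ = Finsupp.single i 1
  · obtain ⟨i₀, hi₀⟩ := hex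
    have happ : ∀ i, m (Sum.inl i) = if i = i₀ then 1 else 0 := by
      intro i
      rw [hfst, hi₀, Finsupp.single_apply]
      simp [eq_comm]
    have hW : (∑ i, m (Sum.inl i)) = 1 := by
      simp [happ]
    rw [if_pos hW]
    rw [Finset.sum_eq_single i₀ (fun j _ hj => by
      rw [if_neg]
      intro hcontra
      exact hj (Finsupp.single_left_injective one_ne_zero (hcontra.symm.trans hi₀)))
      (fun habs => absurd (Finset.mem_univ i₀) habs)]
    rw [if_pos hi₀]
    have hprod : (∏ i, f i ^ m (Sum.inl i)) = f i₀ := by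
      rw [Finset.prod_eq_single i₀ (fun j _ hj => by rw [happ j, if_neg hj, pow_zero])
        (fun habs => absurd (Finset.mem_univ i₀) habs), happ i₀, if_pos rfl, pow_one]
    rw [hprod, show (monomial m₂ c : MvPolynomial (Fin n) K) = C c * monomial m₂ 1 by
      rw [C_mul_monomial, mul_one]]
    ring
  · push_neg at hex
    have hW : (∑ i, m (Sum.inl i)) ≠ 1 := by
      intro hW1
      simp_rw [hfst] at hW1
      obtain ⟨i, hi⟩ := exists_single_of_sum_eq_one hW1
      exact hex i hi
    rw [if_neg hW, Finset.sum_eq_zero fun i _ => by rw [if_neg (hex i)]]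

lemma dir2 (f : Fin s → MvPolynomial (Fin n) K) (g : MvPolynomial (Fin n) K) (M : ℕ)
    (p : MvPolynomial (Fin s ⊕ Fin n) K)
    (hp : aeval (Sum.elim
        (fun i : Fin s => X none * rename (some : Fin n → Option (Fin n)) (f i))
        (fun j : Fin n => (X (some j) : MvPolynomial (Option (Fin n)) K))) p =
      X none * rename (some : Fin n → Option (Fin n)) g)
    (hM : p.support.card = M) :
    ∃ h : Fin s → MvPolynomial (Fin n) K,
      g = ∑ i, h i * f i ∧ (∑ i, (h i).support.card) ≤ M := by
  classical
  set h : Fin s → MvPolynomial (Fin n) K := fun i =>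
    ∑ m ∈ p.support, if (Finsupp.sumFinsuppEquivProdFinsupp m).1 = Finsupp.single i 1 then
      monomial (Finsupp.sumFinsuppEquivProdFinsupp m).2 (coeff m p) else 0 with hh
  refine ⟨h, ?_, ?_⟩
  · rw [key f g p hp]
    calc (∑ m ∈ p.support, if (∑ i, m (Sum.inl i)) = 1 then
            C (coeff m p) * ((∏ i, f i ^ m (Sum.inl i)) *
              monomial (Finsupp.sumFinsuppEquivProdFinsupp m).2 (1:K)) else 0)
        = ∑ m ∈ p.support, ∑ i,
            if (Finsupp.sumFinsuppEquivProdFinsupp m).1 = Finsupp.single i 1 then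
              monomial (Finsupp.sumFinsuppEquivProdFinsupp m).2 (coeff m p) * f i else 0 :=
          Finset.sum_congr rfl fun m _ => perm f m (coeff m p)
      _ = ∑ i, ∑ m ∈ p.support,
            if (Finsupp.sumFinsuppEquivProdFinsupp m).1 = Finsupp.single i 1 then
              monomial (Finsupp.sumFinsuppEquivProdFinsupp m).2 (coeff m p) * f i else 0 :=
          Finset.sum_comm
      _ = ∑ i, h i * f i := by
          refine Finset.sum_congr rfl fun i _ => ?_
          rw [hh, Finset.sum_mul]
          exact Finset.sum_congr rfl fun m _ => by rw [ite_mul, zero_mul]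
  · have hcard1 : ∀ i, (h i).support.card ≤
        ∑ m ∈ p.support, if (Finsupp.sumFinsuppEquivProdFinsupp m).1 = Finsupp.single i 1
          then 1 else 0 := by
      intro i
      refine le_trans (le_trans (Finset.card_le_card support_sum) (Finset.card_biUnion_le))
        (Finset.sum_le_sum fun m _ => ?_)
      split_ifs with hc
      · rw [support_monomial]
        split_ifs <;> simp
      · simp
    have hinner : ∀ m : Fin s ⊕ Fin n →₀ ℕ,
        (∑ i, if (Finsupp.sumFinsuppEquivProdFinsupp m).1 = Finsupp.single i 1
          then 1 else 0) ≤ 1 := by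
      intro m
      rw [Finset.sum_boole, Nat.cast_id]
      refine Finset.card_le_one.mpr fun i hi j hj => ?_
      simp only [Finset.mem_filter] at hi hj
      exact Finsupp.single_left_injective one_ne_zero (hi.2.symm.trans hj.2)
    calc (∑ i, (h i).support.card)
        ≤ ∑ i, ∑ m ∈ p.support,
            if (Finsupp.sumFinsuppEquivProdFinsupp m).1 = Finsupp.single i 1 then 1 else 0 :=
          Finset.sum_le_sum fun i _ => hcard1 i
      _ = ∑ m ∈ p.support, ∑ i,
            if (Finsupp.sumFinsuppEquivProdFinsupp m).1 = Finsupp.single i 1 then 1 else 0 :=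
          Finset.sum_comm
      _ ≤ ∑ _m ∈ p.support, 1 := Finset.sum_le_sum fun m _ => hinner m
      _ = M := by rw [Finset.sum_const, smul_eq_mul, mul_one, hM]

lemma aeval_rename_inr (f : Fin s → MvPolynomial (Fin n) K)
    (q : MvPolynomial (Fin n) K) :
    aeval (Sum.elim
        (fun i : Fin s => X none * rename (some : Fin n → Option (Fin n)) (f i))
        (fun j : Fin n => (X (some j) : MvPolynomial (Option (Fin n)) K)))
      (rename Sum.inr q) = rename (some : Fin n → Option (Fin n)) q := by
  rw [aeval_rename, rename_eq_aeval]
  rfl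

lemma dir1 (f : Fin s → MvPolynomial (Fin n) K) (g : MvPolynomial (Fin n) K) (N : ℕ)
    (h : Fin s → MvPolynomial (Fin n) K) (hg : g = ∑ i, h i * f i)
    (hN : (∑ i, (h i).support.card) ≤ N) :
    ∃ p : MvPolynomial (Fin s ⊕ Fin n) K,
      aeval (Sum.elim
          (fun i : Fin s => X none * rename (some : Fin n → Option (Fin n)) (f i))
          (fun j : Fin n => (X (some j) : MvPolynomial (Option (Fin n)) K))) p =
        X none * rename (some : Fin n → Option (Fin n)) g ∧
      p.support.card ≤ N := by
  classical
  refine ⟨∑ i, rename Sum.inr (h i) * X (Sum.inl i), ?_, ?_⟩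
  · rw [map_sum, hg, map_sum, Finset.mul_sum]
    refine Finset.sum_congr rfl fun i _ => ?_
    rw [map_mul, aeval_rename_inr, aeval_X, Sum.elim_inl, map_mul]
    ring
  · refine le_trans (le_trans (Finset.card_le_card support_sum) Finset.card_biUnion_le) ?_
    refine le_trans (Finset.sum_le_sum fun i (_ : i ∈ Finset.univ) => ?_) hN
    rw [support_mul_X, Finset.card_map,
      support_rename_of_injective Sum.inr_injective,
      Finset.card_image_of_injective _ (Finsupp.mapDomain_injective Sum.inr_injective)]

end Stmt10Aux

/-- Term-count correspondence between representations of `g ∈ ⟨f₁,…,f_s⟩` and certificates of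
`t·g ∈ K[t·f₁,…,t·f_s, x₁,…,xₙ]`: a representation with at most `N` total terms yields a
certificate `p ∈ K[u₁,…,u_s,x₁,…,xₙ]` with at most `N` terms, and conversely any certificate
with `M` terms yields a representation with at most `M` total terms. Here `t = X none`. -/
theorem stmt10 {K : Type*} [Field K] {n s : ℕ}
    (f : Fin s → MvPolynomial (Fin n) K) (g : MvPolynomial (Fin n) K) (N M : ℕ) :
    ((∃ h : Fin s → MvPolynomial (Fin n) K,
        g = ∑ i, h i * f i ∧ (∑ i, (h i).support.card) ≤ N) →
      ∃ p : MvPolynomial (Fin s ⊕ Fin n) K,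
        aeval (Sum.elim
            (fun i : Fin s => X none * rename (some : Fin n → Option (Fin n)) (f i))
            (fun j : Fin n => (X (some j) : MvPolynomial (Option (Fin n)) K))) p =
          X none * rename (some : Fin n → Option (Fin n)) g ∧
        p.support.card ≤ N) ∧
    (∀ p : MvPolynomial (Fin s ⊕ Fin n) K,
      aeval (Sum.elim
          (fun i : Fin s => X none * rename (some : Fin n → Option (Fin n)) (f i))
          (fun j : Fin n => (X (some j) : MvPolynomial (Option (Fin n)) K))) p =
        X none * rename (some : Fin n → Option (Fin n)) g →
      p.support.card = M →
      ∃ h : Fin s → MvPolynomial (Fin n) K,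
        g = ∑ i, h i * f i ∧ (∑ i, (h i).support.card) ≤ M) := by
  constructor
  · rintro ⟨h, hg, hN⟩
    exact Stmt10Aux.dir1 f g N h hg hN
  · intro p hp hM
    exact Stmt10Aux.dir2 f g M p hp hM
end

section
/- Let A = K[f_1,...,f_s] ⊆ K[x_1,...,x_n], t a new variable. If g ∈ ⟨f_1,...,f_s⟩ has minimal representation degree D (the least possible max_i deg h_i over representations g = Σ h_i f_i), then the minimal degree of a certificate p with t·g = p(t f_1,...,t f_s, x_1,...,x_n) equals D + 1. -/
open MvPolynomial

noncomputable section CertAux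

variable {K : Type*} [Field K] {n s : ℕ}

/-- restriction of an exponent vector on `Fin s ⊕ Fin n` to the `Fin n` part. -/
def certRestrict {n s : ℕ} (m : Fin s ⊕ Fin n →₀ ℕ) : Fin n →₀ ℕ :=
  Finsupp.equivFunOnFinite.symm fun j => m (Sum.inr j)

/-- the coefficient polynomials extracted from a certificate. -/
def certH (p : MvPolynomial (Fin s ⊕ Fin n) K) (i : Fin s) : MvPolynomial (Fin n) K :=
  ∑ m ∈ p.support,
    if (∑ k, m (Sum.inl k)) = 1 ∧ m (Sum.inl i) = 1 then
      monomial (certRestrict m) (coeff m p) else 0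

lemma certPhi_monomial (f : Fin s → MvPolynomial (Fin n) K) (m : Fin s ⊕ Fin n →₀ ℕ) (c : K) :
    aeval (Sum.elim (fun i => Polynomial.X * Polynomial.C (f i))
      (fun j : Fin n => Polynomial.C (X j : MvPolynomial (Fin n) K))) (monomial m c)
    = Polynomial.X ^ (∑ k, m (Sum.inl k)) *
      Polynomial.C (C c * (∏ k, f k ^ m (Sum.inl k)) * monomial (certRestrict m) 1) := by
  rw [aeval_monomial, Finsupp.prod_pow]
  rw [Fintype.prod_sum_type]
  have h1 : (∏ i, (Sum.elim (fun i => Polynomial.X * Polynomial.C (f i))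
      (fun j : Fin n => Polynomial.C (X j : MvPolynomial (Fin n) K)) (Sum.inl i)) ^ m (Sum.inl i))
      = Polynomial.X ^ (∑ k, m (Sum.inl k)) * Polynomial.C (∏ k, f k ^ m (Sum.inl k)) := by
    simp only [Sum.elim_inl, mul_pow, ← Polynomial.C_pow]
    rw [Finset.prod_mul_distrib, Finset.prod_pow_eq_pow_sum,
      ← map_prod (Polynomial.C : MvPolynomial (Fin n) K →+* Polynomial (MvPolynomial (Fin n) K)) _ Finset.univ]
  have h2 : (∏ j, (Sum.elim (fun i => Polynomial.X * Polynomial.C (f i))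
      (fun j : Fin n => Polynomial.C (X j : MvPolynomial (Fin n) K)) (Sum.inr j)) ^ m (Sum.inr j))
      = Polynomial.C (monomial (certRestrict m) (1 : K)) := by
    simp only [Sum.elim_inr, ← Polynomial.C_pow]
    rw [← map_prod (Polynomial.C : MvPolynomial (Fin n) K →+* Polynomial (MvPolynomial (Fin n) K)) _ Finset.univ]
    congr 1
    rw [monomial_eq, Finsupp.prod_pow]
    simp [certRestrict]
  rw [h1, h2]
  have : algebraMap K (Polynomial (MvPolynomial (Fin n) K)) c = Polynomial.C (C c) := by
    simp [algebraMap_eq, Polynomial.algebraMap_apply]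
  rw [this]
  push_cast [Polynomial.C_mul]
  ring

lemma certH_spec (f : Fin s → MvPolynomial (Fin n) K) (p : MvPolynomial (Fin s ⊕ Fin n) K) :
    (aeval (Sum.elim (fun i => Polynomial.X * Polynomial.C (f i))
      (fun j : Fin n => Polynomial.C (X j : MvPolynomial (Fin n) K))) p).coeff 1
    = ∑ i, f i * certH p i := by
  conv_lhs => rw [p.as_sum]
  rw [map_sum, Polynomial.finset_sum_coeff]
  simp only [certPhi_monomial]
  unfold certH
  simp only [Finset.mul_sum, mul_ite, mul_zero]
  rw [Finset.sum_comm]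
  apply Finset.sum_congr rfl
  intro m _
  rw [mul_comm, Polynomial.coeff_C_mul, Polynomial.coeff_X_pow]
  rw [mul_ite, mul_one, mul_zero]
  by_cases hdm : (∑ k, m (Sum.inl k)) = 1
  · -- there is a unique index with exponent 1
    have hex : ∃ i₀, m (Sum.inl i₀) ≠ 0 := by
      by_contra hcon
      push_neg at hcon
      simp [hcon] at hdm
    obtain ⟨i₀, hi₀⟩ := hex
    have hsplit : m (Sum.inl i₀) + ∑ k ∈ Finset.univ.erase i₀, m (Sum.inl k) = 1 := by
      rw [Finset.add_sum_erase _ (fun k => m (Sum.inl k)) (Finset.mem_univ i₀)]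
      exact hdm
    have h1 : m (Sum.inl i₀) = 1 := by omega
    have h0 : ∀ k, k ≠ i₀ → m (Sum.inl k) = 0 := by
      intro k hk
      have hz : ∑ k ∈ Finset.univ.erase i₀, m (Sum.inl k) = 0 := by omega
      exact (Finset.sum_eq_zero_iff.mp hz) k (Finset.mem_erase.mpr ⟨hk, Finset.mem_univ k⟩)
    have hprod : (∏ k, f k ^ m (Sum.inl k)) = f i₀ := by
      rw [Finset.prod_eq_single i₀ (fun k _ hk => by rw [h0 k hk, pow_zero])
        (fun h => absurd (Finset.mem_univ i₀) h), h1, pow_one]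
    rw [hprod, if_pos hdm.symm]
    rw [Finset.sum_eq_single i₀ ?_ (fun h => absurd (Finset.mem_univ i₀) h)]
    · rw [if_pos ⟨hdm, h1⟩, mul_comm (C (coeff m p)) (f i₀), mul_assoc, C_mul_monomial, mul_one]
    · intro k _ hk
      rw [if_neg]
      rintro ⟨-, hk1⟩
      have := h0 k hk
      omega
  · rw [if_neg (fun h => hdm h.symm)]
    symm
    apply Finset.sum_eq_zero
    intro i _
    rw [if_neg]
    rintro ⟨h1, -⟩
    exact hdm h1

lemma cert_m_bound {p : MvPolynomial (Fin s ⊕ Fin n) K} {m : Fin s ⊕ Fin n →₀ ℕ}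
    (hm : m ∈ p.support) :
    (∑ k, m (Sum.inl k)) + ∑ j, m (Sum.inr j) ≤ p.totalDegree := by
  have h := le_totalDegree hm
  rwa [Finsupp.sum_fintype _ _ (fun _ => rfl), Fintype.sum_sum_type] at h

lemma certH_totalDegree (p : MvPolynomial (Fin s ⊕ Fin n) K) (i : Fin s) :
    (certH p i).totalDegree ≤ p.totalDegree - 1 := by
  refine (totalDegree_finset_sum _ _).trans (Finset.sup_le ?_)
  intro m hm
  split_ifs with h
  · refine (totalDegree_monomial_le _ _).trans ?_
    have hb : (certRestrict m).sum (fun _ e => e) = ∑ j, m (Sum.inr j) := by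
      rw [Finsupp.sum_fintype _ _ (fun _ => rfl)]
      simp [certRestrict]
    have := cert_m_bound hm
    exact le_trans (le_of_eq hb) (by omega)
  · simp

lemma certH_eq_zero {p : MvPolynomial (Fin s ⊕ Fin n) K} (hp : p.totalDegree = 0) (i : Fin s) :
    certH p i = 0 := by
  apply Finset.sum_eq_zero
  intro m hm
  rw [if_neg]
  rintro ⟨h1, -⟩
  have := cert_m_bound hm
  omega

lemma rename_eq_aeval_X_comp {σ τ : Type*} (f : σ → τ) (q : MvPolynomial σ K) :
    rename f q = aeval (X ∘ f) q := by
  rw [← aeval_rename, aeval_X_left_apply]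

lemma cert_bridge (f : Fin s → MvPolynomial (Fin n) K) (g : MvPolynomial (Fin n) K)
    (p : MvPolynomial (Fin s ⊕ Fin n) K)
    (hp : aeval (Sum.elim
        (fun i : Fin s => X none * rename (some : Fin n → Option (Fin n)) (f i))
        (fun j : Fin n => (X (some j) : MvPolynomial (Option (Fin n)) K))) p =
      X none * rename (some : Fin n → Option (Fin n)) g) :
    aeval (Sum.elim (fun i => Polynomial.X * Polynomial.C (f i))
      (fun j : Fin n => Polynomial.C (X j : MvPolynomial (Fin n) K))) p
    = Polynomial.X * Polynomial.C g := by
  set e : MvPolynomial (Option (Fin n)) K →ₐ[K] Polynomial (MvPolynomial (Fin n) K) :=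
    (optionEquivLeft K (Fin n)).toAlgHom with he
  have he_none : e (X none) = Polynomial.X := by
    simp [he, optionEquivLeft_X_none]
  have he_some : ∀ j, e (X (some j)) = Polynomial.C (X j) := by
    intro j; simp [he, optionEquivLeft_X_some]
  have hren : ∀ q : MvPolynomial (Fin n) K,
      e (rename (some : Fin n → Option (Fin n)) q) = Polynomial.C q := by
    intro q
    rw [rename_eq_aeval_X_comp, comp_aeval_apply (φ := e)]
    have h1 : (fun i : Fin n => e ((X ∘ (some : Fin n → Option (Fin n))) i))
        = fun i => Polynomial.CAlgHom (R := K) (X i) := by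
      funext i
      simp only [Function.comp_apply, Polynomial.CAlgHom_apply]
      exact he_some i
    rw [h1, ← comp_aeval_apply (φ := Polynomial.CAlgHom), aeval_X_left_apply, Polynomial.CAlgHom_apply]
  have h := congrArg e hp
  rw [comp_aeval_apply (φ := e), map_mul, he_none, hren] at h
  have hfun : (fun v => e (Sum.elim
      (fun i : Fin s => X none * rename (some : Fin n → Option (Fin n)) (f i))
      (fun j : Fin n => (X (some j) : MvPolynomial (Option (Fin n)) K)) v))
      = Sum.elim (fun i => Polynomial.X * Polynomial.C (f i))
        (fun j : Fin n => Polynomial.C (X j : MvPolynomial (Fin n) K)) := by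
    funext v
    cases v with
    | inl i => simp only [Sum.elim_inl, map_mul, he_none, hren]
    | inr j => simp only [Sum.elim_inr, he_some]
  rwa [hfun] at h

end CertAux

/-- If `g ≠ 0` lies in `⟨f₁,…,f_s⟩` with minimal representation degree `D` (least possible
`maxᵢ deg hᵢ` over representations `g = Σ hᵢ fᵢ`), then the minimal total degree of a
certificate `p` with `t·g = p(t·f₁,…,t·f_s,x₁,…,xₙ)` equals `D + 1`. Here `t = X none`. -/
theorem stmt11 {K : Type*} [Field K] {n s : ℕ}
    (f : Fin s → MvPolynomial (Fin n) K) (g : MvPolynomial (Fin n) K) (hg : g ≠ 0) (D : ℕ)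
    (hD : IsLeast {D' : ℕ | ∃ h : Fin s → MvPolynomial (Fin n) K,
        g = ∑ i, h i * f i ∧ Finset.univ.sup (fun i => (h i).totalDegree) = D'} D) :
    IsLeast {E : ℕ | ∃ p : MvPolynomial (Fin s ⊕ Fin n) K,
        aeval (Sum.elim
            (fun i : Fin s => X none * rename (some : Fin n → Option (Fin n)) (f i))
            (fun j : Fin n => (X (some j) : MvPolynomial (Option (Fin n)) K))) p =
          X none * rename (some : Fin n → Option (Fin n)) g ∧
        p.totalDegree = E} (D + 1) := by
  set Phi := Sum.elim
      (fun i : Fin s => X none * rename (some : Fin n → Option (Fin n)) (f i))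
      (fun j : Fin n => (X (some j) : MvPolynomial (Option (Fin n)) K)) with hPhi
  have hlb : ∀ E, E ∈ {E : ℕ | ∃ p : MvPolynomial (Fin s ⊕ Fin n) K,
      aeval Phi p = X none * rename (some : Fin n → Option (Fin n)) g ∧
      p.totalDegree = E} → D + 1 ≤ E := by
    rintro E ⟨p, hp, rfl⟩
    have key := cert_bridge f g p hp
    have hco : (Polynomial.X * Polynomial.C g).coeff 1 = g := by
      simp
    have hrep : g = ∑ i, certH p i * f i := by
      have h2 := certH_spec f p
      rw [key, hco] at h2
      rw [h2]
      exact Finset.sum_congr rfl fun i _ => mul_comm _ _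
    have hE1 : 1 ≤ p.totalDegree := by
      by_contra hcon
      push_neg at hcon
      have h0 : p.totalDegree = 0 := by omega
      apply hg
      rw [hrep]
      apply Finset.sum_eq_zero
      intro i _
      rw [certH_eq_zero h0, zero_mul]
    have hDle : D ≤ p.totalDegree - 1 := by
      have := hD.2 ⟨certH p, hrep, rfl⟩
      exact this.trans (Finset.sup_le fun i _ => certH_totalDegree p i)
    omega
  constructor
  · obtain ⟨h, hrep, hsup⟩ := hD.1
    set p₀ : MvPolynomial (Fin s ⊕ Fin n) K :=
      ∑ i, X (Sum.inl i) * rename Sum.inr (h i) with hp₀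
    have hcert : aeval Phi p₀ = X none * rename (some : Fin n → Option (Fin n)) g := by
      rw [hp₀, map_sum]
      have hterm : ∀ i, aeval Phi (X (Sum.inl i) * rename Sum.inr (h i))
          = X none * (rename (some : Fin n → Option (Fin n)) (h i) *
              rename (some : Fin n → Option (Fin n)) (f i)) := by
        intro i
        rw [map_mul, aeval_X, hPhi, Sum.elim_inl, aeval_rename]
        have hfn : (Sum.elim
            (fun i : Fin s => X none * rename (some : Fin n → Option (Fin n)) (f i))
            (fun j : Fin n => (X (some j) : MvPolynomial (Option (Fin n)) K)) ∘ Sum.inr)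
            = (X ∘ (some : Fin n → Option (Fin n))) := by
          funext j
          simp
        rw [hfn, ← rename_eq_aeval_X_comp]
        ring
      rw [Finset.sum_congr rfl fun i _ => hterm i, ← Finset.mul_sum]
      congr 1
      rw [hrep, map_sum]
      exact Finset.sum_congr rfl fun i _ => by rw [map_mul]
    refine ⟨p₀, hcert, ?_⟩
    have hle : p₀.totalDegree ≤ D + 1 := by
      rw [hp₀]
      refine (totalDegree_finset_sum _ _).trans (Finset.sup_le fun i _ => ?_)
      refine (totalDegree_mul _ _).trans ?_
      have h1 : (X (Sum.inl i) : MvPolynomial (Fin s ⊕ Fin n) K).totalDegree ≤ 1 :=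
        le_of_eq (totalDegree_X _)
      have h2 : (rename (Sum.inr : Fin n → Fin s ⊕ Fin n) (h i)).totalDegree ≤ D := by
        refine (totalDegree_rename_le _ _).trans ?_
        calc (h i).totalDegree
            ≤ Finset.univ.sup (fun i => (h i).totalDegree) :=
              Finset.le_sup (f := fun i => (h i).totalDegree) (Finset.mem_univ i)
          _ = D := hsup
      omega
    have hge := hlb p₀.totalDegree ⟨p₀, hcert, rfl⟩
    omega
  · intro E hE
    exact hlb E hE
end

section
/- Let f_1,...,f_s, g ∈ K[x_1,...,x_n], let t_1,...,t_s be new variables, and let J = ⟨f_1 − t_1, ..., f_s − t_s⟩ ⊆ K[x_1,...,x_n,t_1,...,t_s]. Then g ∈ K[f_1,...,f_s] if and only if the coset g + J contains a polynomial lying in K[t_1,...,t_s]. -/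
open MvPolynomial

/-- With `J = ⟨f₁ - t₁, …, f_s - t_s⟩ ⊆ K[x,t]`, we have `g ∈ K[f₁,…,f_s]` iff the coset
`g + J` contains a polynomial lying in `K[t₁,…,t_s]`. Variables: `x` are `Sum.inl`,
`t` are `Sum.inr`. -/
theorem stmt12 {K : Type*} [Field K] {n s : ℕ}
    (f : Fin s → MvPolynomial (Fin n) K) (g : MvPolynomial (Fin n) K) :
    g ∈ Algebra.adjoin K (Set.range f) ↔
      ∃ q : MvPolynomial (Fin s) K,
        rename (Sum.inl : Fin n → Fin n ⊕ Fin s) g -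
            rename (Sum.inr : Fin s → Fin n ⊕ Fin s) q ∈
          Ideal.span (Set.range fun i =>
            rename (Sum.inl : Fin n → Fin n ⊕ Fin s) (f i) - X (Sum.inr i)) := by
  set J : Ideal (MvPolynomial (Fin n ⊕ Fin s) K) := Ideal.span (Set.range fun i =>
    rename (Sum.inl : Fin n → Fin n ⊕ Fin s) (f i) - X (Sum.inr i)) with hJ
  have key : ∀ q : MvPolynomial (Fin s) K,
      rename (Sum.inl : Fin n → Fin n ⊕ Fin s) (aeval f q) -
        rename (Sum.inr : Fin s → Fin n ⊕ Fin s) q ∈ J := by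
    intro q
    induction q using MvPolynomial.induction_on with
    | C a => simp
    | add p q hp hq =>
      have h := J.add_mem hp hq
      convert h using 1
      simp only [map_add]
      ring
    | mul_X p j hp =>
      have hgen : rename (Sum.inl : Fin n → Fin n ⊕ Fin s) (f j) - X (Sum.inr j) ∈ J :=
        hJ ▸ Ideal.subset_span ⟨j, rfl⟩
      have heq : rename (Sum.inl : Fin n → Fin n ⊕ Fin s) (aeval f (p * X j)) -
            rename (Sum.inr : Fin s → Fin n ⊕ Fin s) (p * X j)
          = (rename (Sum.inl : Fin n → Fin n ⊕ Fin s) (aeval f p) -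
              rename (Sum.inr : Fin s → Fin n ⊕ Fin s) p) *
              rename (Sum.inl : Fin n → Fin n ⊕ Fin s) (f j)
            + rename (Sum.inr : Fin s → Fin n ⊕ Fin s) p *
              (rename (Sum.inl : Fin n → Fin n ⊕ Fin s) (f j) - X (Sum.inr j)) := by
        simp only [map_mul, aeval_X, rename_X]
        ring
      rw [heq]
      exact J.add_mem (J.mul_mem_right _ hp) (J.mul_mem_left _ hgen)
  constructor
  · intro hg
    rw [Algebra.adjoin_range_eq_range_aeval] at hg
    obtain ⟨q, rfl⟩ := hg
    exact ⟨q, key q⟩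
  · rintro ⟨q, hq⟩
    have hker : J ≤ RingHom.ker (aeval (Sum.elim X f) :
        MvPolynomial (Fin n ⊕ Fin s) K →ₐ[K] MvPolynomial (Fin n) K).toRingHom := by
      rw [hJ, Ideal.span_le]
      rintro _ ⟨i, rfl⟩
      simp only [SetLike.mem_coe, RingHom.mem_ker, AlgHom.toRingHom_eq_coe, RingHom.coe_coe, map_sub,
        aeval_rename, aeval_X, Sum.elim_inr, Sum.elim_comp_inl, aeval_X_left, AlgHom.id_apply,
        sub_self]
    have h0 : (aeval (Sum.elim X f)) (rename (Sum.inl : Fin n → Fin n ⊕ Fin s) g -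
        rename (Sum.inr : Fin s → Fin n ⊕ Fin s) q) = 0 := hker hq
    rw [map_sub, aeval_rename, aeval_rename] at h0
    have hg : g = aeval f q := by
      have : aeval ((Sum.elim X f) ∘ Sum.inl) g = g := by
        simp [Function.comp, aeval_X_left]
      rw [this] at h0
      have h2 : (Sum.elim X f : Fin n ⊕ Fin s → _) ∘ Sum.inr = f := rfl
      rw [h2] at h0
      exact (sub_eq_zero.mp h0)
    rw [hg, Algebra.adjoin_range_eq_range_aeval]
    exact ⟨q, rfl⟩
end

section
/- The K-subalgebra K[{x_1 x_2^k : k ≥ 0}] of K[x_1,x_2] is not finitely generated as a K-algebra. -/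
open MvPolynomial

/-- Polynomials whose support lies in an additive submonoid of exponents form a subalgebra. -/
def expSub (K : Type*) [Field K] (E : AddSubmonoid (Fin 2 →₀ ℕ)) :
    Subalgebra K (MvPolynomial (Fin 2) K) where
  carrier := {p | ∀ d ∈ p.support, d ∈ E}
  add_mem' := by
    intro a b ha hb d hd
    rcases Finset.mem_union.1 (MvPolynomial.support_add hd) with h | h
    · exact ha d h
    · exact hb d h
  mul_mem' := by
    intro a b ha hb d hd
    obtain ⟨u, hu, v, hv, rfl⟩ := Finset.mem_add.1 (MvPolynomial.support_mul _ _ hd)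
    exact E.add_mem (ha u hu) (hb v hv)
  algebraMap_mem' := by
    intro r d hd
    classical
    have : d = 0 := by
      rw [show (algebraMap K (MvPolynomial (Fin 2) K)) r = monomial 0 r from rfl,
        MvPolynomial.support_monomial] at hd
      by_cases h : r = 0 <;> simp [h] at hd <;> simp_all
    simpa [this] using E.zero_mem

/-- The subalgebra `K[{x₁ x₂^k : k ≥ 0}] ⊆ K[x₁,x₂]` is not finitely generated. -/
theorem stmt16 {K : Type*} [Field K] :
    ¬ (Algebra.adjoin K (Set.range fun k : ℕ =>
        (monomial (Finsupp.single 0 1 + Finsupp.single 1 k) (1 : K) :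
          MvPolynomial (Fin 2) K))).FG := by
  intro hFG
  set f : ℕ → MvPolynomial (Fin 2) K := fun k =>
    monomial (Finsupp.single 0 1 + Finsupp.single 1 k) (1 : K) with hf
  obtain ⟨s, hs⟩ := hFG
  -- exponent evaluations
  have hd0 : ∀ k : ℕ, ((Finsupp.single (0 : Fin 2) 1 + Finsupp.single 1 k : Fin 2 →₀ ℕ)) 0 = 1 := by
    intro k; simp [Finsupp.single_apply]
  have hd1 : ∀ k : ℕ, ((Finsupp.single (0 : Fin 2) 1 + Finsupp.single 1 k : Fin 2 →₀ ℕ)) 1 = k := by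
    intro k; simp [Finsupp.single_apply]
  have hsupp : ∀ k : ℕ, (f k).support =
      {Finsupp.single (0 : Fin 2) 1 + Finsupp.single 1 k} := by
    intro k
    classical
    rw [hf]
    rw [MvPolynomial.support_monomial, if_neg (one_ne_zero : ¬ (1:K) = 0)]
  -- first submonoid: d 0 = 0 → d 1 = 0
  set E0 : AddSubmonoid (Fin 2 →₀ ℕ) :=
    { carrier := {d | d 0 = 0 → d 1 = 0}
      add_mem' := by
        intro a b ha hb h
        simp only [Finsupp.add_apply, Nat.add_eq_zero] at h ⊢
        exact ⟨ha h.1, hb h.2⟩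
      zero_mem' := by simp } with hE0
  have hA0 : Algebra.adjoin K (Set.range f) ≤ expSub K E0 := by
    apply Algebra.adjoin_le
    rintro p ⟨k, rfl⟩ d hd
    rw [hsupp k, Finset.mem_singleton] at hd
    subst hd
    intro h
    rw [hd0 k] at h
    exact absurd h one_ne_zero
  -- N: a bound on the x₂-degrees appearing in s
  set N : ℕ := s.sup (fun p => p.support.sup (fun d => d 1)) with hN
  set EN : AddSubmonoid (Fin 2 →₀ ℕ) :=
    { carrier := {d | d 1 ≤ N * d 0}
      add_mem' := by
        intro a b ha hb
        simp only [Set.mem_setOf_eq, Finsupp.add_apply, Nat.mul_add] at *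
        omega
      zero_mem' := by simp } with hEN
  have hsEN : (s : Set (MvPolynomial (Fin 2) K)) ⊆ expSub K EN := by
    intro p hp d hd
    have hpA : p ∈ Algebra.adjoin K (Set.range f) := by
      rw [← hs]; exact Algebra.subset_adjoin hp
    have h0 : d 0 = 0 → d 1 = 0 := hA0 hpA d hd
    have hle : d 1 ≤ N :=
      le_trans (Finset.le_sup (f := fun d => d 1) hd)
        (Finset.le_sup (f := fun p => p.support.sup (fun d => d 1)) hp)
    show d 1 ≤ N * d 0
    rcases Nat.eq_zero_or_pos (d 0) with h | h
    · simp [h0 h]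
    · calc d 1 ≤ N := hle
        _ ≤ N * d 0 := Nat.le_mul_of_pos_right N h
  have hAEN : Algebra.adjoin K (Set.range f) ≤ expSub K EN := by
    rw [← hs]; exact Algebra.adjoin_le hsEN
  -- contradiction with f (N+1)
  have hmem : f (N + 1) ∈ Algebra.adjoin K (Set.range f) :=
    Algebra.subset_adjoin ⟨N + 1, rfl⟩
  have := hAEN hmem ((Finsupp.single 0 1 + Finsupp.single 1 (N + 1) : Fin 2 →₀ ℕ))
    (by rw [hsupp]; exact Finset.mem_singleton_self _)
  have h2 : ((Finsupp.single (0:Fin 2) 1 + Finsupp.single 1 (N+1) : Fin 2 →₀ ℕ)) 1 ≤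
      N * ((Finsupp.single (0:Fin 2) 1 + Finsupp.single 1 (N+1) : Fin 2 →₀ ℕ)) 0 := this
  rw [hd0, hd1] at h2
  omega
end

section
/- Let a_1,...,a_s, b ∈ ℕ with all a_i ≥ 1. There exist c_1,...,c_s ∈ ℕ with Σ c_i a_i = b if and only if the monomial x^b lies in the subalgebra K[x^{a_1},...,x^{a_s}] of the univariate polynomial ring K[x]. -/
open Polynomial

/-- Polynomials whose support is contained in an additive submonoid `M` of `ℕ`
form a subalgebra of `K[X]`. -/
def expSupported (K : Type*) [Field K] (M : AddSubmonoid ℕ) : Subalgebra K K[X] where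
  carrier := {p | ∀ n, p.coeff n ≠ 0 → n ∈ M}
  add_mem' := by
    intro p q hp hq n h
    rw [Polynomial.coeff_add] at h
    by_cases h1 : p.coeff n = 0
    · exact hq n (by simpa [h1] using h)
    · exact hp n h1
  mul_mem' := by
    intro p q hp hq n h
    rw [Polynomial.coeff_mul] at h
    obtain ⟨⟨i, j⟩, hij, hne⟩ := Finset.exists_ne_zero_of_sum_ne_zero h
    rw [Finset.HasAntidiagonal.mem_antidiagonal] at hij
    subst hij
    exact M.add_mem (hp i fun h0 => hne (by simp [h0]))
      (hq j fun h0 => hne (by simp [h0]))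
  algebraMap_mem' := by
    intro r n h
    rw [Polynomial.algebraMap_eq, Polynomial.coeff_C] at h
    by_cases h0 : n = 0
    · simpa [h0] using M.zero_mem
    · simp [h0] at h

theorem mem_closure_iff_sum {s : ℕ} (a : Fin s → ℕ) (b : ℕ) :
    b ∈ AddSubmonoid.closure (Set.range a) ↔ ∃ c : Fin s → ℕ, ∑ i, c i * a i = b := by
  constructor
  · intro hb
    induction hb using AddSubmonoid.closure_induction with
    | mem x hx =>
      obtain ⟨i, rfl⟩ := hx
      exact ⟨fun j => if j = i then 1 else 0, by simp⟩
    | zero => exact ⟨0, by simp⟩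
    | add x y _ _ hx hy =>
      obtain ⟨c, hc⟩ := hx
      obtain ⟨d, hd⟩ := hy
      exact ⟨c + d, by simp [add_mul, Finset.sum_add_distrib, hc, hd]⟩
  · rintro ⟨c, rfl⟩
    exact AddSubmonoid.sum_mem _ fun i _ => by
      have h1 : a i ∈ AddSubmonoid.closure (Set.range a) :=
        AddSubmonoid.subset_closure (Set.mem_range_self i)
      simpa [smul_eq_mul] using nsmul_mem h1 (c i)

/-- For `a₁,…,a_s, b ∈ ℕ` with all `aᵢ ≥ 1`: `Σ cᵢ aᵢ = b` has a solution in `ℕ^s` iff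
`x^b ∈ K[x^{a₁},…,x^{a_s}] ⊆ K[x]`. -/
theorem stmt18 {K : Type*} [Field K] {s : ℕ}
    (a : Fin s → ℕ) (ha : ∀ i, 1 ≤ a i) (b : ℕ) :
    (∃ c : Fin s → ℕ, ∑ i, c i * a i = b) ↔
      (X ^ b : K[X]) ∈ Algebra.adjoin K (Set.range fun i => (X ^ a i : K[X])) := by
  constructor
  · rintro ⟨c, rfl⟩
    have : (X ^ ∑ i, c i * a i : K[X]) = ∏ i, (X ^ a i) ^ c i :=
      ((Finset.prod_pow_eq_pow_sum _ _ _).symm).trans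
        (Finset.prod_congr rfl fun i _ => by rw [← pow_mul, mul_comm])
    rw [this]
    exact prod_mem fun i _ => pow_mem (Algebra.subset_adjoin (Set.mem_range_self i)) _
  · intro h
    set M := AddSubmonoid.closure (Set.range a) with hM
    have hle : Algebra.adjoin K (Set.range fun i => (X ^ a i : K[X])) ≤ expSupported K M := by
      apply Algebra.adjoin_le
      rintro _ ⟨i, rfl⟩
      intro n hn
      rw [Polynomial.coeff_X_pow] at hn
      by_cases h0 : n = a i
      · exact h0 ▸ AddSubmonoid.subset_closure (Set.mem_range_self i)
      · simp [h0] at hn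
    have hb : b ∈ M := by
      have := hle h b
      apply this
      simp [Polynomial.coeff_X_pow]
    exact (mem_closure_iff_sum a b).mp hb
end
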